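/- arXiv:1102.4985 — 3 statements merged into one kernel-verified Lean document; each statement's English description precedes it below -/
import Mathlib

section
/- If f : G → F satisfies the rank-r contraction conditions (for every graph G = (V,E), U ⊆ V with |U| = r+1, and s : U → V\U: Σ_{π∈S_U} sgn(π) f(G/(s∘π)) = 0), then f satisfies the (k = r)-color conditions: for every graph G = (V,E), U ⊆ V with |U| = r+1, and s : U → V, Σ_{π∈S_U} sgn(π) f(G_{s∘π}) = 0. -/
structure MGraph : Type 1 where
  V : Type
  E : Type
  [fintV : Fintype V]
  [fintE : Fintype E]
  [decV : DecidableEq V]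
  [decE : DecidableEq E]
  ends : E → V × V

attribute [instance] MGraph.fintV MGraph.fintE MGraph.decV MGraph.decE

namespace MGraph

/-- multiplicity with which vertex `v` occurs among the endpoints of edge `e`
(a loop counts twice). -/
def inc (G : MGraph) (v : G.V) (e : G.E) : ℕ :=
  (if (G.ends e).1 = v then 1 else 0) + (if (G.ends e).2 = v then 1 else 0)

/-- `κ(δ(v))` : the incidence vector in `ℕ^k` of the multiset of colors seen at `v`. -/
def degVec (G : MGraph) {k : ℕ} (κ : G.E → Fin k) (v : G.V) : Fin k → ℕ :=
  fun c => ∑ e : G.E, if κ e = c then G.inc v e else 0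

/-- the partition function of the `k`-color vertex model `y`. -/
def pf {F : Type} [CommRing F] (k : ℕ) (y : (Fin k → ℕ) → F) (G : MGraph) : F :=
  ∑ κ : G.E → Fin k, ∏ v : G.V, y (G.degVec κ v)

def empty : MGraph where
  V := Empty
  E := Empty
  ends := Empty.elim

def disjUnion (G H : MGraph) : MGraph where
  V := G.V ⊕ H.V
  E := G.E ⊕ H.E
  ends := Sum.elim (fun e => (Sum.inl (G.ends e).1, Sum.inl (G.ends e).2))
    (fun e => (Sum.inr (H.ends e).1, Sum.inr (H.ends e).2))

/-- `G_t` : add the edges `{u t(u) | u ∈ U}`. -/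
def addEdges (G : MGraph) (U : Finset G.V) (t : {v // v ∈ U} → G.V) : MGraph where
  V := G.V
  E := G.E ⊕ {v // v ∈ U}
  ends := Sum.elim G.ends (fun u => (u.1, t u))

/-- `G/t` : add the edges `{u t(u) | u ∈ U}` and contract them. -/
noncomputable def contract (G : MGraph) (U : Finset G.V) (t : {v // v ∈ U} → G.V) : MGraph :=
  letI s : Setoid G.V := Relation.EqvGen.setoid (fun a b => ∃ h : a ∈ U, t ⟨a, h⟩ = b)
  letI : DecidableEq (Quotient s) := Classical.decEq _
  letI : Fintype (Quotient s) := Fintype.ofSurjective (Quotient.mk s)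
    (fun q => Quot.exists_rep q)
  { V := Quotient s
    E := G.E
    ends := fun e => (Quotient.mk s (G.ends e).1, Quotient.mk s (G.ends e).2) }

/-- isomorphism of multigraphs. -/
structure Iso (G H : MGraph) where
  vEquiv : G.V ≃ H.V
  eEquiv : G.E ≃ H.E
  ends_eq : ∀ e, H.ends (eEquiv e) = Prod.map vEquiv vEquiv (G.ends e) ∨
    H.ends (eEquiv e) = (Prod.map vEquiv vEquiv (G.ends e)).swap

end MGraph

/-!
Attach to `G` a pendant vertex `u'` with edge `u u'` at each `u ∈ U`, and contract these pendant
edges with their far ends redirected to `s(u)`. The pendant vertices form an `(r+1)`-set disjoint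
from the targets `s(u)`, so the contraction condition applies to them; and contracting the edge
`u' s(u)` just merges the new vertex `u'` into `s(u)`, leaving `u u'` as an edge `u s(u)`. Hence
each term of the contraction sum is isomorphic to the corresponding `G_{s ∘ π}`.
-/
namespace MGraph

section Contraction

variable (G : MGraph) (U : Finset G.V) (t : U → G.V)

def contractMk : G.V → (G.contract U t).V := Quotient.mk _

theorem contractMk_eq (u : U) : G.contractMk U t u = G.contractMk U t (t u) :=
  Quotient.sound (.rel _ _ ⟨u.2, rfl⟩)

theorem contractMk_surjective : Function.Surjective (G.contractMk U t) :=
  Quotient.mk_surjective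

variable {U t} in
def contractLift {W : Type*} (g : G.V → W) (hg : ∀ u : U, g u = g (t u)) :
    (G.contract U t).V → W :=
  Quotient.lift g fun _ _ hab =>
    (Setoid.ker g).iseqv.eqvGen_iff.mp (hab.mono fun a _ ⟨ha, hb⟩ => hb ▸ hg ⟨a, ha⟩)

end Contraction

section Pendants

variable (G : MGraph) (U : Finset G.V)

def attachPendants : MGraph where
  V := G.V ⊕ U
  E := G.E ⊕ U
  ends := Sum.elim (Prod.map Sum.inl Sum.inl ∘ G.ends) fun u => (Sum.inl u.1, Sum.inr u)

def pendants : Finset (G.attachPendants U).V := ({w | w.isRight} : Finset (G.V ⊕ U))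

theorem mem_pendants {w : G.V ⊕ U} : w ∈ G.pendants U ↔ w.isRight :=
  Finset.mem_filter.trans (and_iff_right (Finset.mem_univ _))

def pendantsEquiv : G.pendants U ≃ U :=
  (Equiv.subtypeEquivRight fun _ => G.mem_pendants U).trans Equiv.sumIsRight

theorem card_pendants : (G.pendants U).card = U.card := by
  simpa using (Fintype.card_congr (G.pendantsEquiv U))

theorem inl_notMem_pendants (v : G.V) : (Sum.inl v : (G.attachPendants U).V) ∉ G.pendants U := by
  simp [mem_pendants]

theorem inr_mem_pendants (u : U) : (Sum.inr u : (G.attachPendants U).V) ∈ G.pendants U := by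
  simp [mem_pendants]

variable {G U} in
def contractPendantsIso (t : U → G.V) :
    ((G.attachPendants U).contract (G.pendants U) (Sum.inl ∘ t ∘ G.pendantsEquiv U)).Iso
      (G.addEdges U t) where
  vEquiv :=
    { toFun := contractLift _ (Sum.elim id t) fun ⟨w, hw⟩ => by
        cases w with
        | inl v => exact absurd hw (G.inl_notMem_pendants U v)
        | inr u => rfl
      invFun := contractMk _ _ _ ∘ Sum.inl
      left_inv := fun w => by
        obtain ⟨w | u, rfl⟩ := contractMk_surjective _ _ _ w
        · rfl
        · exact (contractMk_eq (G.attachPendants U) (G.pendants U) _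
            ⟨Sum.inr u, G.inr_mem_pendants U u⟩).symm
      right_inv := fun _ => rfl }
  eEquiv := Equiv.refl _
  ends_eq := by rintro (e | u) <;> exact Or.inl rfl

end Pendants

end MGraph

theorem Equiv.comp_permCongr_comp {α β γ : Type*} (e : α ≃ β) (g : β → γ)
    (π : Equiv.Perm α) :
    (g ∘ e.permCongr π) ∘ e = (g ∘ e) ∘ π := by
  ext; simp

theorem Equiv.Perm.sum_sign_mul_permCongr {α β R : Type*} [Fintype α] [DecidableEq α]
    [Fintype β] [DecidableEq β] [Ring R] (e : α ≃ β) (g : Equiv.Perm β → R) :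
    ∑ π : Equiv.Perm α, ((Equiv.Perm.sign π : ℤ) : R) * g (e.permCongr π) =
      ∑ π : Equiv.Perm β, ((Equiv.Perm.sign π : ℤ) : R) * g π :=
  Fintype.sum_equiv e.permCongr _ _ fun π => by rw [Equiv.Perm.sign_permCongr]

/-- the rank-`r` contraction conditions imply the `(k = r)`-color
edge-addition conditions, for any isomorphism-invariant graph parameter. -/
theorem contract_conditions_imply_addEdges_conditions {F : Type} [CommRing F]
    (r : ℕ) (f : MGraph → F)
    (hiso : ∀ G H : MGraph, Nonempty (G.Iso H) → f G = f H)
    (hcontr : ∀ (G : MGraph) (U : Finset G.V), U.card = r + 1 →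
      ∀ s : {v // v ∈ U} → G.V, (∀ u, s u ∉ U) →
        ∑ π : Equiv.Perm {v // v ∈ U},
          ((Equiv.Perm.sign π : ℤ) : F) * f (G.contract U (s ∘ π)) = 0) :
    ∀ (G : MGraph) (U : Finset G.V), U.card = r + 1 → ∀ s : {v // v ∈ U} → G.V,
      ∑ π : Equiv.Perm {v // v ∈ U},
        ((Equiv.Perm.sign π : ℤ) : F) * f (G.addEdges U (s ∘ π)) = 0 := by
  intro G U hU s
  set e := G.pendantsEquiv U
  have hpend := hcontr (G.attachPendants U) (G.pendants U) (by rw [G.card_pendants, hU])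
    (Sum.inl ∘ s ∘ e) fun _ => G.inl_notMem_pendants U _
  have hterm (π : Equiv.Perm (G.pendants U)) :
      f (G.addEdges U (s ∘ e.permCongr π)) =
        f ((G.attachPendants U).contract (G.pendants U) ((Sum.inl ∘ s ∘ e) ∘ π)) := by
    refine (hiso _ _ ⟨MGraph.contractPendantsIso _⟩).symm.trans ?_
    congr 2
    exact e.comp_permCongr_comp (Sum.inl ∘ s) π
  rw [← hpend, ← Equiv.Perm.sum_sign_mul_permCongr e]
  simp only [hterm]
end

section
/- Define f : G → C by f(G) = (-2)^{c(G)} if G is 2-regular (where c(G) is the number of connected components) and f(G) = 0 otherwise. Then f(∅) = 1, f is multiplicative, but f is not the partition function of any k-color vertex model over C for any k: for every k there exist a graph G, U ⊆ V(G) with |U| = k+1, and s : U → V(G) with Σ_{π∈S_U} sgn(π) f(G_{s∘π}) ≠ 0. -/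
namespace MGraph

/-- the number of connected components of a multigraph: the number of classes of the
equivalence relation generated by adjacency. -/
noncomputable def numComponents (G : MGraph) : ℕ :=
  Nat.card (Quotient (Relation.EqvGen.setoid
    (fun a b : G.V => ∃ e : G.E, G.ends e = (a, b) ∨ G.ends e = (b, a))))

/-- a multigraph is 2-regular if every vertex has degree 2 (a loop counting twice). -/
def TwoRegular (G : MGraph) : Prop := ∀ v : G.V, (∑ e : G.E, G.inc v e) = 2

end MGraph

/-!
Expanding the partition function of `G_{s ∘ π}` over edge colourings and recording the colour of
the new edge at `u` as `d (π u)`, a term depends on `π` only through the colours `d ∘ π` seen at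
the vertices of `U`. If `|U| > k`, the colouring `d` identifies two points `i ≠ j` of `U`, so
`π ↦ swap i j * π` pairs off terms of opposite sign: the signed sum vanishes for every vertex
model with `k` colours.

For `f` take `n` isolated vertices, `U` all of them and `s` the inclusion. Then `G_{s ∘ π}` is
the functional graph of `π`: it is 2-regular with one component per cycle of `π`, including fixed
points. Writing `c(π)` for that number, `sign π = (-1) ^ (n + c(π))`, so every term
`sign π * (-2) ^ c(π)` equals `(-1) ^ n * 2 ^ c(π)` and the signed sum cannot vanish.
-/

open Equiv Function Finset

namespace Relation

variable {α β : Type*} (r : α → α → Prop) (s : β → β → Prop)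

theorem eqvGen_liftRel_iff (a b : α ⊕ β) :
    EqvGen (Sum.LiftRel r s) a b ↔ Sum.LiftRel (EqvGen r) (EqvGen s) a b := by
  refine ⟨fun h => ?_, fun h => ?_⟩
  · induction h with
    | rel a b h => exact h.mono (fun _ _ => EqvGen.rel _ _) (fun _ _ => EqvGen.rel _ _)
    | refl a => cases a <;> constructor <;> exact EqvGen.refl _
    | symm a b _ ih =>
      cases ih with
      | inl h => exact .inl h.symm
      | inr h => exact .inr h.symm
    | trans a b c _ _ ih₁ ih₂ =>
      rcases ih₁ with h₁ | h₁ <;> rcases ih₂ with h₂ | h₂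
      exacts [.inl (h₁.trans _ _ _ h₂), .inr (h₁.trans _ _ _ h₂)]
  · cases h with
    | inl h =>
      exact Setoid.eqvGen_le (s := (EqvGen.setoid (Sum.LiftRel r s)).comap Sum.inl)
        (fun _ _ hxy => EqvGen.rel _ _ (.inl hxy)) h
    | inr h =>
      exact Setoid.eqvGen_le (s := (EqvGen.setoid (Sum.LiftRel r s)).comap Sum.inr)
        (fun _ _ hxy => EqvGen.rel _ _ (.inr hxy)) h

noncomputable def quotientEqvGenLiftRelEquiv :
    Quotient (EqvGen.setoid (Sum.LiftRel r s)) ≃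
      Quotient (EqvGen.setoid r) ⊕ Quotient (EqvGen.setoid s) :=
  (Quotient.congrRight fun a b => (eqvGen_liftRel_iff r s a b).trans <| by
      rcases a with a | a <;> rcases b with b | b <;>
        simp only [Sum.liftRel_inl_inl, Sum.liftRel_inr_inr, Sum.not_liftRel_inl_inr,
          Sum.not_liftRel_inr_inl, Setoid.ker_def, Sum.map_inl, Sum.map_inr, Sum.inl.injEq,
          Sum.inr.injEq, reduceCtorEq, Quotient.eq_iff_equiv] <;> rfl).trans
    (Setoid.quotientKerEquivOfSurjective (Sum.map (Quotient.mk _) (Quotient.mk _))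
      (Sum.map_surjective.2 ⟨Quotient.mk_surjective, Quotient.mk_surjective⟩))

end Relation

namespace Equiv.Perm

theorem eqvGen_apply_eq_or_apply_eq_iff_sameCycle {α : Type*} [Finite α] (σ : Perm α)
    (x y : α) :
    Relation.EqvGen (fun a b => σ a = b ∨ σ b = a) x y ↔ σ.SameCycle x y := by
  refine ⟨fun h => ?_, fun h => ?_⟩
  · refine Setoid.eqvGen_le (s := SameCycle.setoid σ) ?_ h
    rintro a b (rfl | rfl)
    exacts [sameCycle_apply_right.2 (SameCycle.refl σ a),
      (sameCycle_apply_right.2 (SameCycle.refl σ b)).symm]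
  · obtain ⟨i, -, rfl⟩ := h.exists_pow_eq'
    clear h
    induction i with
    | zero => exact Relation.EqvGen.refl x
    | succ i ih =>
      refine ih.trans _ _ _ (Relation.EqvGen.rel _ _ (Or.inl ?_))
      rw [pow_succ', Perm.mul_apply]

variable {α : Type*} [Fintype α] [DecidableEq α]

def fixedPointOrCycleOf (σ : Perm α) (x : α) : fixedPoints σ ⊕ σ.cycleFactorsFinset :=
  if hx : σ x = x then .inl ⟨x, hx⟩
  else .inr ⟨σ.cycleOf x, cycleOf_mem_cycleFactorsFinset_iff.2 (mem_support.2 hx)⟩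

theorem fixedPointOrCycleOf_eq_fixedPointOrCycleOf_iff (σ : Perm α) (x y : α) :
    σ.fixedPointOrCycleOf x = σ.fixedPointOrCycleOf y ↔ σ.SameCycle x y := by
  by_cases hx : σ x = x <;> by_cases hy : σ y = y <;>
    simp only [fixedPointOrCycleOf, hx, hy, dite_true, dite_false, reduceCtorEq, false_iff,
      Sum.inl.injEq, Sum.inr.injEq, Subtype.mk.injEq]
  · refine ⟨fun h => ?_, fun h => Subtype.ext (h.eq_of_left hx)⟩
    cases h
    exact SameCycle.refl σ x
  · exact fun h => hy ((h.apply_eq_self_iff).1 hx)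
  · exact fun h => hx ((h.apply_eq_self_iff).2 hy)
  · refine ⟨fun h => ?_, SameCycle.cycleOf_eq⟩
    have hy' : y ∈ (σ.cycleOf x).support := by
      rw [h, mem_support, cycleOf_apply_self]; exact hy
    exact (mem_support_cycleOf_iff.1 hy').1

theorem fixedPointOrCycleOf_surjective (σ : Perm α) : Surjective σ.fixedPointOrCycleOf := by
  rintro (⟨x, hx⟩ | ⟨c, hc⟩)
  · exact ⟨x, by simp [fixedPointOrCycleOf, show σ x = x from hx]⟩
  · obtain ⟨x, hx⟩ := (mem_cycleFactorsFinset_iff.1 hc).1.nonempty_support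
    have hσx : σ x ≠ x := mem_support.1 (mem_cycleFactorsFinset_support_le hc hx)
    exact ⟨x, by simp [fixedPointOrCycleOf, hσx, cycle_is_cycleOf hx hc]⟩

theorem nat_card_quotient_sameCycle (σ : Perm α) :
    Nat.card (Quotient (SameCycle.setoid σ)) = Multiset.card σ.partition.parts := by
  have hker : SameCycle.setoid σ = Setoid.ker σ.fixedPointOrCycleOf :=
    Setoid.ext fun x y => (σ.fixedPointOrCycleOf_eq_fixedPointOrCycleOf_iff x y).symm
  rw [hker, Nat.card_congr (Setoid.quotientKerEquivOfSurjective _ σ.fixedPointOrCycleOf_surjective),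
    Nat.card_sum, Nat.card_eq_fintype_card, card_fixedPoints, sum_cycleType,
    Nat.card_eq_fintype_card, Fintype.card_coe, parts_partition, Multiset.card_add,
    Multiset.card_replicate, cycleType_def, Multiset.card_map, add_comm]
  rfl

theorem sign_eq_neg_one_pow_card_add_card_parts (σ : Perm α) :
    sign σ = (-1) ^ (Fintype.card α + Multiset.card σ.partition.parts) := by
  have hsupp : #σ.support ≤ Fintype.card α := card_le_univ _
  rw [sign_of_cycleType, sum_cycleType, parts_partition, Multiset.card_add,
    Multiset.card_replicate,
    show Fintype.card α + (Multiset.card σ.cycleType + (Fintype.card α - #σ.support)) =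
      #σ.support + Multiset.card σ.cycleType + 2 * (Fintype.card α - #σ.support) by omega,
    pow_add _ _ (2 * _), pow_mul, neg_one_sq, one_pow, mul_one]

theorem sum_sign_mul_neg_two_pow_card_parts_ne_zero :
    ∑ σ : Perm α, (sign σ : ℤ) * (-2) ^ Multiset.card σ.partition.parts ≠ 0 := by
  have hterm : ∀ σ : Perm α, (sign σ : ℤ) * (-2) ^ Multiset.card σ.partition.parts =
      (-1) ^ Fintype.card α * 2 ^ Multiset.card σ.partition.parts := fun σ => by
    rw [sign_eq_neg_one_pow_card_add_card_parts, Units.val_pow_eq_pow_val, Units.val_neg,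
      Units.val_one, pow_add, mul_assoc, ← mul_pow]
    norm_num
  rw [Finset.sum_congr rfl fun σ _ => hterm σ, ← Finset.mul_sum]
  exact mul_ne_zero (pow_ne_zero _ (by norm_num))
    (Finset.sum_pos (fun σ _ => by positivity) Finset.univ_nonempty).ne'

theorem sum_sign_mul_comp_eq_zero {ι β R : Type*} [Fintype ι] [DecidableEq ι] [Ring R]
    (F : (ι → β) → R) {d : ι → β} (hd : ¬ Injective d) :
    ∑ σ : Perm ι, (sign σ : ℤ) * F (d ∘ σ) = 0 := by
  obtain ⟨i, j, hdij, hij⟩ : ∃ i j, d i = d j ∧ i ≠ j := by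
    simpa [Injective] using hd
  refine Finset.sum_involution (fun σ _ => swap i j * σ) (fun σ _ => ?_)
    (fun σ _ _ => (not_congr swap_mul_eq_iff).2 hij) (fun σ _ => Finset.mem_univ _)
    (fun σ _ => swap_mul_involutive i j σ)
  have hswap : d ∘ swap i j = d := funext (apply_swap_eq_self hdij)
  rw [coe_mul, ← comp_assoc, hswap, sign_mul, sign_swap hij]
  simp

end Equiv.Perm

namespace MGraph

def Adj (G : MGraph) (a b : G.V) : Prop := ∃ e, G.ends e = (a, b) ∨ G.ends e = (b, a)

theorem numComponents_def (G : MGraph) :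
    G.numComponents = Nat.card (Quotient (Relation.EqvGen.setoid G.Adj)) := rfl

theorem twoRegular_empty : empty.TwoRegular := fun v => v.elim

theorem numComponents_empty : empty.numComponents = 0 := by
  rw [numComponents_def]
  have : IsEmpty empty.V := inferInstanceAs (IsEmpty Empty)
  exact Nat.card_of_isEmpty

section

variable (G H : MGraph)

theorem sum_inc_disjUnion_inl (v : G.V) :
    ∑ e, (G.disjUnion H).inc (.inl v) e = ∑ e, G.inc v e :=
  (Fintype.sum_sum_type _).trans (by simp [disjUnion, inc])

theorem sum_inc_disjUnion_inr (v : H.V) :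
    ∑ e, (G.disjUnion H).inc (.inr v) e = ∑ e, H.inc v e :=
  (Fintype.sum_sum_type _).trans (by simp [disjUnion, inc])

theorem twoRegular_disjUnion_iff :
    (G.disjUnion H).TwoRegular ↔ G.TwoRegular ∧ H.TwoRegular := by
  refine ⟨fun h => ⟨fun v => ?_, fun v => ?_⟩, fun ⟨hG, hH⟩ v => ?_⟩
  · rw [← sum_inc_disjUnion_inl G H]; exact h _
  · rw [← sum_inc_disjUnion_inr G H]; exact h _
  · rcases v with v | v
    · rw [sum_inc_disjUnion_inl]; exact hG v
    · rw [sum_inc_disjUnion_inr]; exact hH v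

theorem adj_disjUnion : (G.disjUnion H).Adj = Sum.LiftRel G.Adj H.Adj := by
  ext a b
  constructor
  · rintro ⟨e | e, he | he⟩ <;> simp only [disjUnion, Sum.elim_inl, Sum.elim_inr] at he <;>
      obtain ⟨rfl, rfl⟩ := he
    exacts [.inl ⟨e, .inl rfl⟩, .inl ⟨e, .inr rfl⟩, .inr ⟨e, .inl rfl⟩, .inr ⟨e, .inr rfl⟩]
  · rintro (⟨⟨e, he | he⟩⟩ | ⟨⟨e, he | he⟩⟩)
    exacts [⟨.inl e, .inl (by simp [disjUnion, he])⟩, ⟨.inl e, .inr (by simp [disjUnion, he])⟩,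
      ⟨.inr e, .inl (by simp [disjUnion, he])⟩, ⟨.inr e, .inr (by simp [disjUnion, he])⟩]

theorem numComponents_disjUnion :
    (G.disjUnion H).numComponents = G.numComponents + H.numComponents := by
  rw [numComponents_def, adj_disjUnion]
  exact (Nat.card_congr (Relation.quotientEqvGenLiftRelEquiv G.Adj H.Adj)).trans (Nat.card_sum ..)

end

open scoped Classical in
noncomputable def twoRegularWeight (G : MGraph) : ℂ :=
  if G.TwoRegular then (-2 : ℂ) ^ G.numComponents else 0

theorem twoRegularWeight_empty : twoRegularWeight empty = 1 := by
  simp [twoRegularWeight, twoRegular_empty, numComponents_empty]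

theorem twoRegularWeight_disjUnion (G H : MGraph) :
    twoRegularWeight (G.disjUnion H) = twoRegularWeight G * twoRegularWeight H := by
  by_cases hG : G.TwoRegular <;> by_cases hH : H.TwoRegular <;>
    simp [twoRegularWeight, twoRegular_disjUnion_iff, numComponents_disjUnion, pow_add, hG, hH]

section

variable {k : ℕ}

def endDegVec {ι V : Type*} [Fintype ι] [DecidableEq V] (t : ι → V) (c : ι → Fin k) (v : V) :
    Fin k → ℕ :=
  fun j => ∑ u, if c u = j then (if t u = v then 1 else 0) else 0

theorem endDegVec_comp_perm {ι V : Type*} [Fintype ι] [DecidableEq V] (t : ι → V)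
    (c : ι → Fin k) (π : Perm ι) : endDegVec (t ∘ π) (c ∘ π) = endDegVec t c := by
  ext v j
  exact Equiv.sum_comp π (fun u => if c u = j then (if t u = v then 1 else 0) else 0)

theorem degVec_addEdges (G : MGraph) (U : Finset G.V) (t : U → G.V) (κ : G.E → Fin k)
    (c : U → Fin k) (v : G.V) :
    (G.addEdges U t).degVec (Sum.elim κ c) v =
      G.degVec κ v + endDegVec Subtype.val c v + endDegVec t c v := by
  ext j
  refine (Fintype.sum_sum_type _).trans ?_
  rw [Pi.add_apply, Pi.add_apply, add_assoc, endDegVec, endDegVec, ← sum_add_distrib]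
  exact congrArg _ (sum_congr rfl fun u _ => ite_add_zero)

theorem pf_addEdges {F : Type} [CommRing F] (y : (Fin k → ℕ) → F) (G : MGraph)
    (U : Finset G.V) (t : U → G.V) :
    pf k y (G.addEdges U t) = ∑ κ : G.E → Fin k, ∑ c : U → Fin k,
      ∏ v, y (G.degVec κ v + endDegVec Subtype.val c v + endDegVec t c v) := by
  change ∑ κ : G.E ⊕ U → Fin k, _ = _
  rw [← (sumArrowEquivProdArrow _ _ _).symm.sum_comp, Fintype.sum_prod_type]
  simp only [← degVec_addEdges]
  rfl

theorem pf_addEdges_comp_perm {F : Type} [CommRing F] (y : (Fin k → ℕ) → F) (G : MGraph)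
    (U : Finset G.V) (s : U → G.V) (π : Perm U) :
    pf k y (G.addEdges U (s ∘ π)) = ∑ κ : G.E → Fin k, ∑ d : U → Fin k,
      ∏ v, y (G.degVec κ v + endDegVec Subtype.val (d ∘ π) v + endDegVec s d v) := by
  rw [pf_addEdges]
  refine sum_congr rfl fun κ _ => ?_
  refine (Fintype.sum_equiv (π.symm.arrowCongr (Equiv.refl (Fin k))) _ _ fun d => ?_).symm
  rw [show π.symm.arrowCongr (Equiv.refl (Fin k)) d = d ∘ π from rfl, endDegVec_comp_perm]

theorem sum_sign_mul_pf_addEdges_eq_zero {F : Type} [CommRing F] (y : (Fin k → ℕ) → F)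
    (G : MGraph) (U : Finset G.V) (s : U → G.V) (hU : k < U.card) :
    ∑ π : Perm U, (Perm.sign π : ℤ) * pf k y (G.addEdges U (s ∘ π)) = 0 := by
  simp_rw [pf_addEdges_comp_perm, mul_sum]
  rw [sum_comm]
  refine sum_eq_zero fun κ _ => ?_
  rw [sum_comm]
  refine sum_eq_zero fun d _ => Perm.sum_sign_mul_comp_eq_zero
    (fun a => ∏ v, y (G.degVec κ v + endDegVec Subtype.val a v + endDegVec s d v)) fun hd => ?_
  exact hU.not_ge (by simpa using Fintype.card_le_of_injective d hd)

end

abbrev edgeless (α : Type) [Fintype α] [DecidableEq α] : MGraph where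
  V := α
  E := Empty
  ends := Empty.elim

section

variable {α : Type} [Fintype α] [DecidableEq α]

theorem twoRegular_edgeless_addEdges (π : Perm (univ : Finset α)) :
    ((edgeless α).addEdges univ (Subtype.val ∘ π)).TwoRegular := by
  intro (v : α)
  have hval : ∑ u : (univ : Finset α), (if (u : α) = v then 1 else 0) = 1 :=
    ((subtypeUnivEquiv mem_univ).sum_comp fun a => if a = v then 1 else 0).trans (by simp)
  have hperm := Equiv.sum_comp π fun u : (univ : Finset α) => if (u : α) = v then 1 else 0
  refine (Fintype.sum_sum_type _).trans ?_
  change 0 + ∑ u : (univ : Finset α), ((if (u : α) = v then 1 else 0) +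
    (if (π u : α) = v then 1 else 0)) = 2
  rw [zero_add, sum_add_distrib, hperm, hval]

theorem adj_edgeless_addEdges_iff (π : Perm (univ : Finset α)) (a b : α) :
    ((edgeless α).addEdges univ (Subtype.val ∘ π)).Adj a b ↔
      (subtypeUnivEquiv mem_univ).permCongr π a = b ∨
        (subtypeUnivEquiv mem_univ).permCongr π b = a := by
  constructor
  · rintro ⟨e | u, he | he⟩
    · exact e.elim
    · exact e.elim
    · obtain ⟨rfl, rfl⟩ := Prod.mk.inj he
      exact .inl rfl
    · obtain ⟨rfl, rfl⟩ := Prod.mk.inj he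
      exact .inr rfl
  · rintro (rfl | rfl)
    exacts [⟨.inr ⟨a, mem_univ a⟩, .inl rfl⟩, ⟨.inr ⟨b, mem_univ b⟩, .inr rfl⟩]

theorem numComponents_edgeless_addEdges (π : Perm (univ : Finset α)) :
    ((edgeless α).addEdges univ (Subtype.val ∘ π)).numComponents =
      Multiset.card ((subtypeUnivEquiv mem_univ).permCongr π).partition.parts := by
  set σ := (subtypeUnivEquiv mem_univ).permCongr π
  refine (Nat.card_congr (Quotient.congr (Equiv.refl α) fun a b => ?_)).trans
    σ.nat_card_quotient_sameCycle
  exact Iff.trans ⟨fun h => Setoid.eqvGen_mono (fun _ _ => (adj_edgeless_addEdges_iff π _ _).1) h,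
    fun h => Setoid.eqvGen_mono (fun _ _ => (adj_edgeless_addEdges_iff π _ _).2) h⟩
    (σ.eqvGen_apply_eq_or_apply_eq_iff_sameCycle a b)

end

theorem sum_sign_mul_twoRegularWeight_edgeless_addEdges (α : Type) [Fintype α] [DecidableEq α] :
    ∑ π : Perm (univ : Finset α),
        (Perm.sign π : ℤ) * twoRegularWeight ((edgeless α).addEdges univ (Subtype.val ∘ π)) =
      ((∑ σ : Perm α, (Perm.sign σ : ℤ) * (-2) ^ Multiset.card σ.partition.parts : ℤ) : ℂ) := by
  rw [← (subtypeUnivEquiv (mem_univ (α := α))).permCongr.sum_comp]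
  push_cast
  refine sum_congr rfl fun π _ => ?_
  rw [twoRegularWeight, if_pos (twoRegular_edgeless_addEdges π), numComponents_edgeless_addEdges,
    Perm.sign_permCongr]

theorem exists_sum_sign_mul_twoRegularWeight_addEdges_ne_zero (n : ℕ) :
    ∃ (G : MGraph) (U : Finset G.V) (s : U → G.V), U.card = n ∧
      ∑ π : Perm U, (Perm.sign π : ℤ) * twoRegularWeight (G.addEdges U (s ∘ π)) ≠ 0 := by
  refine ⟨edgeless (Fin n), univ, Subtype.val, card_fin n, ?_⟩
  rw [sum_sign_mul_twoRegularWeight_edgeless_addEdges, Int.cast_ne_zero]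
  exact Perm.sum_sign_mul_neg_two_pow_card_parts_ne_zero

theorem not_forall_twoRegularWeight_eq_pf (k : ℕ) (y : (Fin k → ℕ) → ℂ) :
    ¬ ∀ G, twoRegularWeight G = pf k y G := by
  intro h
  obtain ⟨G, U, s, hU, hne⟩ := exists_sum_sign_mul_twoRegularWeight_addEdges_ne_zero (k + 1)
  simp only [h] at hne
  exact hne (sum_sign_mul_pf_addEdges_eq_zero y G U s (hU ▸ k.lt_succ_self))

end MGraph

open scoped Classical in
/-- the parameter `f(G) = (-2)^{c(G)}` for 2-regular `G` (and `0`
otherwise) is multiplicative with `f(∅) = 1`, but for every `k` it violates the signed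
edge-addition condition, hence it is not the partition function of any vertex model. -/
theorem two_regular_counterexample :
    letI f : MGraph → ℂ :=
      fun G => if G.TwoRegular then (-2 : ℂ) ^ G.numComponents else 0
    (f MGraph.empty = 1 ∧ ∀ G H : MGraph, f (G.disjUnion H) = f G * f H) ∧
    (∀ k : ℕ, ¬ ∃ y : (Fin k → ℕ) → ℂ, ∀ G : MGraph, f G = MGraph.pf k y G) ∧
    ∀ k : ℕ, ∃ (G : MGraph) (U : Finset G.V) (s : {v // v ∈ U} → G.V),
      U.card = k + 1 ∧
      ∑ π : Equiv.Perm {v // v ∈ U},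
        ((Equiv.Perm.sign π : ℤ) : ℂ) * f (G.addEdges U (s ∘ π)) ≠ 0 := by
  exact ⟨⟨MGraph.twoRegularWeight_empty, MGraph.twoRegularWeight_disjUnion⟩,
    fun k ⟨y, hy⟩ => MGraph.not_forall_twoRegularWeight_eq_pf k y hy,
    fun k => MGraph.exists_sum_sign_mul_twoRegularWeight_addEdges_ne_zero (k + 1)⟩
end

section
/- Let F be an algebraically closed field of characteristic 0 and k, r, d ∈ N with n = 2(r+1)+d. For each π ∈ S_{r+1} define μ_π : O(Sym F^{n×n}) → FG_m (m = r+1+d) by μ_π(Π_{ij∈E} x_{i,j}) = G/(s∘π), where s(i) = r+1+i for i ∈ [r+1] and U = [r+1], and define σ_π : O(F^{k×n}) → R_m by σ_π(Π_{j,i} z_{i,j}^{α_{i,j}}) = Π_{j=1}^{r+1} y_{α_j + α_{r+1+π(j)}} · Π_{j=2r+3}^{n} y_{α_j}. Then with τ(q)(z) = q(z^T z) and p the partition-function map, p ∘ μ_π = σ_π ∘ τ for every π ∈ S_{r+1}. -/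
set_option linter.unusedVariables false

open MvPolynomial

/-- the polynomial ring `R = F[y_α : α ∈ ℕ^k]`. -/
abbrev PolyR (F : Type) [CommRing F] (k : ℕ) : Type := MvPolynomial (Fin k → ℕ) F

/-- the partition function of `G` as a polynomial in the variables `y_α`, i.e.
`p(G)(y) = f_y(G)`. -/
noncomputable def pPoly (F : Type) [CommRing F] (k : ℕ) (G : MGraph) : PolyR F k :=
  ∑ κ : G.E → Fin k, ∏ v : G.V, X (G.degVec κ v)

/-- the linear extension of `p` to formal linear combinations of graphs. -/
noncomputable def pLin (F : Type) [CommRing F] (k : ℕ) : (MGraph →₀ F) →ₗ[F] PolyR F k :=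
  Finsupp.linearCombination F (pPoly F k)

/-- the substitution action of a matrix `g` on `F[x_1,…,x_k]` : `x_i ↦ ∑_j g_{j i} x_j`. -/
noncomputable def substAct {F : Type} [CommRing F] {k : ℕ}
    (g : Matrix (Fin k) (Fin k) F) :
    MvPolynomial (Fin k) F →ₐ[F] MvPolynomial (Fin k) F :=
  aeval (fun i => ∑ j, C (g j i) * X j)

/-- the linear map `F[x_1,…,x_k] → R` sending the monomial `x^α` to the variable `y_α`. -/
noncomputable def monToVar (F : Type) [CommRing F] (k : ℕ)
    (q : MvPolynomial (Fin k) F) : PolyR F k :=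
  ∑ d ∈ q.support, C (q.coeff d) * X (⇑d : Fin k → ℕ)

/-- the action of a matrix `g` on `R = F[y_α]` induced from the substitution action on
`F[x_1,…,x_k]` via the identification `y_α ↔ x^α`. -/
noncomputable def gAct {F : Type} [CommRing F] {k : ℕ}
    (g : Matrix (Fin k) (Fin k) F) : PolyR F k →ₐ[F] PolyR F k :=
  aeval (fun α : Fin k → ℕ => monToVar F k (substAct g (∏ i, X i ^ α i)))

/-- `O_k`-invariance of an element of `R`. -/
def OkInvariant {F : Type} [CommRing F] {k : ℕ} (q : PolyR F k) : Prop :=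
  ∀ g : Matrix (Fin k) (Fin k) F, g.transpose * g = 1 → gAct g q = q

/-- `τ : O(Sym F^{n×n}) → O(F^{k×n})`, `τ(q)(z) = q(zᵀz)` : the algebra map sending the
coordinate `x_{ij}` to `∑_h z_{h,i} z_{h,j}`. -/
noncomputable def tauMap (F : Type) [CommRing F] (k n : ℕ) :
    MvPolynomial (Sym2 (Fin n)) F →ₐ[F] MvPolynomial (Fin k × Fin n) F :=
  aeval (fun s => Sym2.lift
    ⟨fun i j => ∑ h : Fin k, X (h, i) * X (h, j),
      fun i j => Finset.sum_congr rfl (fun h _ => mul_comm _ _)⟩ s)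

/-- the multigraph on vertex set `[n]` whose edge multiset is given by the exponent
vector `d` of a monomial in the variables `x_{ij}`. -/
noncomputable def graphOf (n : ℕ) (d : Sym2 (Fin n) →₀ ℕ) : MGraph where
  V := Fin n
  E := (s : Sym2 (Fin n)) × Fin (d s)
  ends := fun e => (Quot.out e.1 : Fin n × Fin n)

/-- `μ_π : O(Sym F^{n×n}) → FG_m` (`n = 2(r+1)+d`, `m = r+1+d`): the monomial
`∏_{ij ∈ E} x_{ij}` is sent to `G/(s∘π)` where `G = ([n], E)`, `U = [r+1]` and
`s(i) = r+1+i`. -/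
noncomputable def muPi (F : Type) [CommRing F] (r d : ℕ) (π : Equiv.Perm (Fin (r + 1))) :
    MvPolynomial (Sym2 (Fin (2 * (r + 1) + d))) F →ₗ[F] (MGraph →₀ F) :=
  (MvPolynomial.basisMonomials (Sym2 (Fin (2 * (r + 1) + d))) F).constr F
    (fun dm => Finsupp.single
      ((graphOf (2 * (r + 1) + d) dm).contract
        (Finset.univ.filter (fun v : Fin (2 * (r + 1) + d) => v.val < r + 1))
        (fun u => ⟨r + 1 + (π ⟨u.1.val, (Finset.mem_filter.mp u.2).2⟩).val,
          by have := (π ⟨u.1.val, (Finset.mem_filter.mp u.2).2⟩).isLt; omega⟩))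
      (1 : F))

/-- `σ_π : O(F^{k×n}) → R_m`, sending the monomial with exponent matrix `α` to
`∏_{j=1}^{r+1} y_{α_j + α_{r+1+π(j)}} · ∏_{j=2r+3}^{n} y_{α_j}`. -/
noncomputable def sigmaPi (F : Type) [CommRing F] (k r d : ℕ)
    (π : Equiv.Perm (Fin (r + 1))) :
    MvPolynomial (Fin k × Fin (2 * (r + 1) + d)) F →ₗ[F] PolyR F k :=
  (MvPolynomial.basisMonomials (Fin k × Fin (2 * (r + 1) + d)) F).constr F
    (fun β =>
      (∏ j : Fin (r + 1), X (fun i =>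
          β (i, (⟨j.val, by have := j.isLt; omega⟩ : Fin (2 * (r + 1) + d))) +
          β (i, (⟨r + 1 + (π j).val, by have := (π j).isLt; omega⟩ :
              Fin (2 * (r + 1) + d))))) *
      ∏ j : Fin d, X (fun i =>
        β (i, (⟨2 * (r + 1) + j.val, by have := j.isLt; omega⟩ :
            Fin (2 * (r + 1) + d)))))

/-!
Expanding `τ(x^E) = ∏_{ij ∈ E} ∑_h z_{h,i} z_{h,j}` over the colourings `κ : E → [k]` of the
edges of `G = ([n], E)` gives one monomial per colouring, whose exponent matrix has as column `v`
the colour-degree vector `κ(δ(v))`. Contracting the edges `{j, r+1+π(j)}` merges exactly the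
vertices `j` and `r+1+π(j)` and leaves `2r+3, …, n` alone, so in `G/(s∘π)` the colour-degree vector
of a merged vertex is the sum of the two corresponding columns. That is the variable `σ_π`
assigns, so both sides agree on every monomial, colouring by colouring.
-/
theorem Relation.eqvGen_iff_of_invariant {α ι : Type*} {rel : α → α → Prop} (c : α → ι)
    (hc : ∀ a b, rel a b → c a = c b) (rp : ι → α) (hrp : ∀ a, EqvGen rel (rp (c a)) a)
    {a b : α} : EqvGen rel a b ↔ c a = c b := by
  refine ⟨fun h => ?_, fun h => ((hrp a).symm _ _).trans _ _ _ (h ▸ hrp b)⟩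
  induction h with
  | rel _ _ hr => exact hc _ _ hr
  | refl => rfl
  | symm _ _ _ ih => exact ih.symm
  | trans _ _ _ _ _ ih₁ ih₂ => exact ih₁.trans ih₂

theorem constr_basisMonomials_monomial {σ R M : Type*} [CommRing R] [AddCommMonoid M] [Module R M]
    (f : (σ →₀ ℕ) → M) (s : σ →₀ ℕ) :
    (basisMonomials σ R).constr R f (monomial s 1) = f s := by
  rw [← congrFun (coe_basisMonomials σ R) s, Module.Basis.constr_basis]

namespace MGraph

noncomputable def degFinsupp (G : MGraph) {k : ℕ} (κ : G.E → Fin k) : Fin k × G.V →₀ ℕ :=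
  ∑ e, (Finsupp.single (κ e, (G.ends e).1) 1 + Finsupp.single (κ e, (G.ends e).2) 1)

theorem degFinsupp_apply (G : MGraph) {k : ℕ} (κ : G.E → Fin k) (c : Fin k) (v : G.V) :
    G.degFinsupp κ (c, v) = G.degVec κ v c := by
  simp only [degFinsupp, degVec, inc, Finsupp.finsetSum_apply, Finsupp.add_apply,
    Finsupp.single_apply, Prod.mk.injEq]
  refine Finset.sum_congr rfl fun e _ => ?_
  by_cases hc : κ e = c <;> simp [hc]

variable (G : MGraph) (U : Finset G.V) (t : {v // v ∈ U} → G.V)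

noncomputable def contractProj (v : G.V) : (G.contract U t).V := Quotient.mk _ v

theorem contractProj_eq_iff {a b : G.V} : G.contractProj U t a = G.contractProj U t b ↔
    Relation.EqvGen (fun a b => ∃ h : a ∈ U, t ⟨a, h⟩ = b) a b :=
  Quotient.eq

theorem contractProj_surjective : Function.Surjective (G.contractProj U t) :=
  Quotient.mk_surjective

theorem degVec_contract {k : ℕ} (κ : G.E → Fin k) (q : (G.contract U t).V) (c : Fin k) :
    (G.contract U t).degVec κ q c =
      ∑ v, if G.contractProj U t v = q then G.degVec κ v c else 0 := by
  simp only [degVec, ← Finset.sum_filter]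
  rw [Finset.sum_comm]
  refine Finset.sum_congr rfl fun e _ => ?_
  simp only [inc, Finset.sum_add_distrib, Finset.sum_ite_eq, Finset.mem_filter, Finset.mem_univ,
    true_and]
  rfl

theorem pPoly_contract_of_classifier (F : Type) [CommRing F] (k : ℕ) {ι : Type*} [Fintype ι]
    [DecidableEq ι] (c : G.V → ι) (rp : ι → G.V)
    (hc : ∀ a b, G.contractProj U t a = G.contractProj U t b ↔ c a = c b)
    (hcrp : ∀ x, c (rp x) = x) :
    pPoly F k (G.contract U t) =
      ∑ κ : G.E → Fin k, ∏ x : ι, X (fun i => ∑ v, if c v = x then G.degVec κ v i else 0) := by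
  have hbij : Function.Bijective (fun x => G.contractProj U t (rp x)) := by
    refine ⟨fun x y hxy => ?_, fun q => ?_⟩
    · simpa only [hcrp] using (hc _ _).mp hxy
    · obtain ⟨v, rfl⟩ := G.contractProj_surjective U t q
      exact ⟨c v, (hc _ _).mpr (hcrp _)⟩
  refine Finset.sum_congr rfl fun (κ : G.E → Fin k) _ =>
    (Fintype.prod_bijective _ hbij _ _ fun x => ?_).symm
  congr 1
  funext i
  rw [degVec_contract]
  simp only [hc, hcrp]

end MGraph

theorem tauMap_X (F : Type) [CommRing F] (k n : ℕ) (s : Sym2 (Fin n)) :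
    tauMap F k n (X s) = ∑ h : Fin k, X (h, s.out.1) * X (h, s.out.2) := by
  rw [tauMap, aeval_X]
  conv_lhs => rw [← Quot.out_eq s]
  rfl

theorem tauMap_monomial (F : Type) [CommRing F] (k n : ℕ) (dm : Sym2 (Fin n) →₀ ℕ) :
    tauMap F k n (monomial dm 1) =
      ∑ κ : (graphOf n dm).E → Fin k,
        monomial (σ := Fin k × Fin n) ((graphOf n dm).degFinsupp κ) 1 := by
  have hedge : ∀ e : (graphOf n dm).E, tauMap F k n (X e.1) =
      ∑ h : Fin k, monomial (Finsupp.single (h, ((graphOf n dm).ends e).1) 1 +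
        Finsupp.single (h, ((graphOf n dm).ends e).2) 1) 1 := fun e => by
    rw [tauMap_X]
    simp only [X, monomial_mul, mul_one]
    rfl
  calc tauMap F k n (monomial dm 1)
      = ∏ s, tauMap F k n (X s) ^ dm s := by
        rw [monomial_eq, C_1, one_mul, Finsupp.prod_fintype _ _ fun _ => pow_zero _, map_prod]
        simp only [map_pow]
    _ = ∏ e : (graphOf n dm).E, tauMap F k n (X e.1) := by
        show _ = ∏ e : (Σ s, Fin (dm s)), _
        rw [← Finset.univ_sigma_univ, Finset.prod_sigma]
        simp
    _ = _ := by
        simp only [hedge, Finset.prod_univ_sum, Fintype.piFinset_univ, ← monomial_sum_one]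
        rfl

section Blocks

variable (r d : ℕ) (π : Equiv.Perm (Fin (r + 1)))

/-- The set `U` and the map `s ∘ π` in the definition of `muPi`. -/
def lowerVertices : Finset (Fin (2 * (r + 1) + d)) :=
  Finset.univ.filter (fun v => v.val < r + 1)

def matchPi (u : {v // v ∈ lowerVertices r d}) : Fin (2 * (r + 1) + d) :=
  ⟨r + 1 + (π ⟨u.1.val, (Finset.mem_filter.mp u.2).2⟩).val,
    by have := (π ⟨u.1.val, (Finset.mem_filter.mp u.2).2⟩).isLt; omega⟩

/-- The vertex of `G/(s∘π)` containing `v`: `inl j` is the merged vertex `{j, r+1+π(j)}`, and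
`inr j` is the untouched vertex `2(r+1)+j`. -/
def blockOf (v : Fin (2 * (r + 1) + d)) : Fin (r + 1) ⊕ Fin d :=
  if h : v.val < r + 1 then Sum.inl ⟨v.val, h⟩
  else if h2 : v.val < 2 * (r + 1) then Sum.inl (π.symm ⟨v.val - (r + 1), by omega⟩)
  else Sum.inr ⟨v.val - 2 * (r + 1), by omega⟩

def blockRep : Fin (r + 1) ⊕ Fin d → Fin (2 * (r + 1) + d)
  | Sum.inl j => ⟨j.val, by omega⟩
  | Sum.inr j => ⟨2 * (r + 1) + j.val, by omega⟩

variable {r d π}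

theorem blockOf_eq_inl_iff {v : Fin (2 * (r + 1) + d)} {j : Fin (r + 1)} :
    blockOf r d π v = Sum.inl j ↔ v.val = j.val ∨ v.val = r + 1 + (π j).val := by
  have := (π j).isLt
  unfold blockOf
  split_ifs <;> simp only [Sum.inl.injEq, Equiv.symm_apply_eq, Fin.ext_iff, false_iff] <;> omega

theorem blockOf_eq_inr_iff {v : Fin (2 * (r + 1) + d)} {j : Fin d} :
    blockOf r d π v = Sum.inr j ↔ v.val = 2 * (r + 1) + j.val := by
  unfold blockOf
  split_ifs <;> simp only [false_iff, Sum.inr.injEq, Fin.ext_iff] <;> omega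

theorem blockOf_blockRep (x : Fin (r + 1) ⊕ Fin d) : blockOf r d π (blockRep r d x) = x := by
  cases x with
  | inl j => exact blockOf_eq_inl_iff.mpr (Or.inl rfl)
  | inr j => exact blockOf_eq_inr_iff.mpr rfl

theorem blockOf_matchPi (u : {v // v ∈ lowerVertices r d}) :
    blockOf r d π u.1 = blockOf r d π (matchPi r d π u) :=
  let j : Fin (r + 1) := ⟨u.1.val, (Finset.mem_filter.mp u.2).2⟩
  (blockOf_eq_inl_iff (j := j) |>.mpr (Or.inl rfl)).trans
    (blockOf_eq_inl_iff (j := j) |>.mpr (Or.inr rfl)).symm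

theorem eqvGen_blockRep_blockOf (v : Fin (2 * (r + 1) + d)) :
    Relation.EqvGen (fun a b => ∃ h : a ∈ lowerVertices r d, matchPi r d π ⟨a, h⟩ = b)
      (blockRep r d (blockOf r d π v)) v := by
  unfold blockOf
  split_ifs with h₁ h₂
  · exact .refl v
  · refine .rel _ _ ⟨Finset.mem_filter.mpr ⟨Finset.mem_univ _, ?_⟩, Fin.ext ?_⟩
    · exact (π.symm _).isLt
    · simp only [matchPi, blockRep, Fin.eta, Equiv.apply_symm_apply]
      omega
  · convert Relation.EqvGen.refl v using 1
    ext
    simp only [blockRep]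
    omega

theorem contractProj_eq_iff_blockOf (dm : Sym2 (Fin (2 * (r + 1) + d)) →₀ ℕ)
    (a b : Fin (2 * (r + 1) + d)) :
    (graphOf _ dm).contractProj (lowerVertices r d) (matchPi r d π) a =
      (graphOf _ dm).contractProj (lowerVertices r d) (matchPi r d π) b ↔
    blockOf r d π a = blockOf r d π b :=
  (MGraph.contractProj_eq_iff _ _ _).trans <| Relation.eqvGen_iff_of_invariant _
    (fun a _ ⟨h, hab⟩ => hab ▸ blockOf_matchPi ⟨a, h⟩) _ eqvGen_blockRep_blockOf

theorem sum_blockOf_inl (f : Fin (2 * (r + 1) + d) → ℕ) (j : Fin (r + 1)) :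
    (∑ v, if blockOf r d π v = Sum.inl j then f v else 0) =
      f ⟨j.val, by omega⟩ + f ⟨r + 1 + (π j).val, by have := (π j).isLt; omega⟩ := by
  have hfiber : Finset.univ.filter (blockOf r d π · = Sum.inl j) =
      {⟨j.val, by omega⟩, ⟨r + 1 + (π j).val, by have := (π j).isLt; omega⟩} := by
    ext v
    simp [blockOf_eq_inl_iff, Fin.ext_iff]
  rw [← Finset.sum_filter, hfiber, Finset.sum_pair (by simp [Fin.ext_iff]; omega)]

theorem sum_blockOf_inr (f : Fin (2 * (r + 1) + d) → ℕ) (j : Fin d) :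
    (∑ v, if blockOf r d π v = Sum.inr j then f v else 0) = f ⟨2 * (r + 1) + j.val, by omega⟩ := by
  have hfiber : Finset.univ.filter (blockOf r d π · = Sum.inr j) =
      {⟨2 * (r + 1) + j.val, by omega⟩} := by
    ext v
    simp [blockOf_eq_inr_iff, Fin.ext_iff]
  rw [← Finset.sum_filter, hfiber, Finset.sum_singleton]

end Blocks

theorem muPi_monomial (F : Type) [CommRing F] (r d : ℕ) (π : Equiv.Perm (Fin (r + 1)))
    (dm : Sym2 (Fin (2 * (r + 1) + d)) →₀ ℕ) :
    muPi F r d π (monomial dm 1) =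
      Finsupp.single ((graphOf _ dm).contract (lowerVertices r d) (matchPi r d π)) 1 :=
  constr_basisMonomials_monomial _ dm

theorem pLin_comp_muPi_eq_sigmaPi_comp_tauMap_general
    (F : Type) [Field F] (k r d : ℕ)
    (π : Equiv.Perm (Fin (r + 1))) :
    (pLin F k).comp (muPi F r d π) =
      (sigmaPi F k r d π).comp (tauMap F k (2 * (r + 1) + d)).toLinearMap := by
  refine (basisMonomials _ F).ext fun dm => ?_
  rw [coe_basisMonomials, LinearMap.comp_apply, LinearMap.comp_apply, AlgHom.toLinearMap_apply,
    tauMap_monomial, map_sum, muPi_monomial, pLin, Finsupp.linearCombination_single, one_smul]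
  refine (MGraph.pPoly_contract_of_classifier _ _ _ F k (blockOf r d π) (blockRep r d)
    (contractProj_eq_iff_blockOf dm) blockOf_blockRep).trans (Finset.sum_congr rfl fun κ _ => ?_)
  -- `(graphOf n dm).V` is `Fin n` only after unfolding `graphOf`, which `rw` does not do.
  erw [Fintype.prod_sum_type, sigmaPi, constr_basisMonomials_monomial]
  congr 1 <;> refine Finset.prod_congr rfl fun j _ => congrArg X (funext fun i => ?_)
  · erw [sum_blockOf_inl, MGraph.degFinsupp_apply, MGraph.degFinsupp_apply]
  · erw [sum_blockOf_inr, MGraph.degFinsupp_apply]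

/-- for every `π ∈ S_{r+1}` the diagram commutes: `p ∘ μ_π = σ_π ∘ τ`. -/
theorem pLin_comp_muPi_eq_sigmaPi_comp_tauMap
    (F : Type) [Field F] [IsAlgClosed F] [CharZero F] (k r d : ℕ)
    (π : Equiv.Perm (Fin (r + 1))) :
    (pLin F k).comp (muPi F r d π) =
      (sigmaPi F k r d π).comp (tauMap F k (2 * (r + 1) + d)).toLinearMap :=
  pLin_comp_muPi_eq_sigmaPi_comp_tauMap_general F k r d π
end
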